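/- The singular series for the Goldbach problem is bounded below: for every even positive integer 2n, ∑_{q=1}^∞ μ(q)^2 c_q(−2n)/φ(q)^2 ≥ c for some absolute constant c > 0 (in fact the series equals 2 ∏_{p>2}(1 − 1/(p−1)^2) · ∏_{p | n, p > 2} (p−1)/(p−2) ≥ some positive constant). -/

import Mathlib

/-- The Ramanujan sum `c_q(n) = ∑_{a=1, (a,q)=1}^{q} e(an/q)`, where `e(x) = exp(2πix)`. -/
noncomputable def ramanujanSum (q : ℕ) (n : ℤ) : ℂ :=
  ∑ a ∈ (Finset.Icc 1 q).filter (fun a => Nat.gcd a q = 1),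
    Complex.exp (2 * Real.pi * Complex.I * ((a : ℤ) * n) / q)

/-!
Möbius inversion over `gcd(a, q)` evaluates the Ramanujan sum as the Dirichlet convolution
`c_q(m) = ∑_{d ∣ q} μ(d) (q/d) [q/d ∣ m]`, which is multiplicative in `q`. Hence so is the term
`μ(q)² c_q(m) / φ(q)²`; it vanishes unless `q` is squarefree, and then it is `O(σ(m) q^{-3/2})`
because `q³ ≤ 16 φ(q)⁴`. The series is therefore the absolutely convergent Euler product
`∏_p (1 + (p [p ∣ m] - 1) / (p - 1)²)`. For even `m` the factor at `2` is `2` and every other factor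
is at least `1 - 1/(p - 1)²`, while a product of `1 - 1/j²` over distinct integers `j ≥ 2` exceeds
`∏_{j ≥ 2} (1 - 1/j²) = 1/2`; so the series is at least `1`.
-/

open Complex Finset ArithmeticFunction
open scoped ArithmeticFunction.Moebius ArithmeticFunction.sigma Nat

theorem sum_Icc_exp_two_pi_I_mul_div {N : ℕ} (hN : N ≠ 0) (k : ℤ) :
    ∑ b ∈ Icc 1 N, exp (2 * Real.pi * I * ((b : ℤ) * k) / N) =
      if (N : ℤ) ∣ k then (N : ℂ) else 0 := by
  have hζ := isPrimitiveRoot_exp N hN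
  set z := exp (2 * Real.pi * I / N) ^ k
  have hterm (b : ℕ) : exp (2 * Real.pi * I * ((b : ℤ) * k) / N) = z ^ b := by
    simp only [z, ← exp_int_mul, ← exp_nat_mul]
    congr 1
    push_cast
    ring
  simp_rw [hterm]
  split_ifs with hdvd
  · simp [z, (hζ.zpow_eq_one_iff_dvd k).2 hdvd]
  · have hz : z ≠ 1 := mt (hζ.zpow_eq_one_iff_dvd k).1 hdvd
    have hzN : z ^ N = 1 := by
      rw [← zpow_natCast, ← zpow_mul, mul_comm k, zpow_mul, zpow_natCast, hζ.pow_eq_one, one_zpow]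
    rw [← Ico_add_one_right_eq_Icc, sum_Ico_eq_sum_range, Nat.add_sub_cancel]
    simp_rw [pow_add, ← mul_sum, geom_sum_eq hz, hzN, sub_self, zero_div, mul_zero]

theorem sum_divisors_moebius {R : Type*} [Ring R] (n : ℕ) :
    ∑ d ∈ n.divisors, (μ d : R) = if n = 1 then 1 else 0 := by
  have h := congr($(coe_moebius_mul_coe_zeta (R := R)) n)
  rwa [coe_mul_zeta_apply, one_apply] at h

theorem sum_divisors_filter_dvd_moebius {R : Type*} [Ring R] (a : ℕ) {q : ℕ} (hq : q ≠ 0) :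
    ∑ d ∈ q.divisors with d ∣ a, (μ d : R) = if a.gcd q = 1 then 1 else 0 := by
  have : {d ∈ q.divisors | d ∣ a} = (a.gcd q).divisors := by
    ext d
    simp [Nat.dvd_gcd_iff, hq, and_comm]
  rw [this, sum_divisors_moebius]

theorem Icc_filter_dvd_mul_eq_map {d : ℕ} (hd : d ≠ 0) (t : ℕ) :
    {a ∈ Icc 1 (d * t) | d ∣ a} = (Icc 1 t).map ⟨(d * ·), mul_right_injective₀ hd⟩ := by
  ext a
  simp only [mem_filter, mem_Icc, mem_map, Function.Embedding.coeFn_mk]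
  constructor
  · rintro ⟨⟨ha1, hat⟩, b, rfl⟩
    exact ⟨b, ⟨Nat.pos_of_mul_pos_left ha1,
      Nat.le_of_mul_le_mul_left hat (Nat.pos_of_ne_zero hd)⟩, rfl⟩
  · rintro ⟨b, ⟨hb1, hbt⟩, rfl⟩
    exact ⟨⟨Nat.mul_pos (Nat.pos_of_ne_zero hd) hb1, Nat.mul_le_mul_left d hbt⟩, dvd_mul_right d b⟩

def idOfDvd (m : ℕ) : ArithmeticFunction ℤ :=
  ⟨fun e => if e ∣ m then e else 0, by simp⟩

theorem idOfDvd_apply (m e : ℕ) : idOfDvd m e = if e ∣ m then (e : ℤ) else 0 := rfl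

theorem isMultiplicative_idOfDvd (m : ℕ) : (idOfDvd m).IsMultiplicative := by
  refine ⟨by simp [idOfDvd_apply], fun {a b} hab => ?_⟩
  have hdvd : a * b ∣ m ↔ a ∣ m ∧ b ∣ m :=
    ⟨fun h => ⟨dvd_of_mul_right_dvd h, dvd_of_mul_left_dvd h⟩,
      fun h => hab.mul_dvd_of_dvd_of_dvd h.1 h.2⟩
  simp only [idOfDvd_apply, hdvd]
  split_ifs <;> simp_all

theorem isMultiplicative_moebius_mul_idOfDvd (m : ℕ) : (μ * idOfDvd m).IsMultiplicative :=
  isMultiplicative_moebius.mul (isMultiplicative_idOfDvd m)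

theorem ramanujanSum_eq_moebius_mul_idOfDvd (q : ℕ) (k : ℤ) :
    ramanujanSum q k = ((μ * idOfDvd k.natAbs) q : ℂ) := by
  rcases eq_or_ne q 0 with rfl | hq
  · simp [ramanujanSum]
  set e : ℕ → ℂ := fun a => exp (2 * Real.pi * I * ((a : ℤ) * k) / q)
  have hcoprime (a : ℕ) : (if a.gcd q = 1 then e a else 0) =
      ∑ d ∈ q.divisors, if d ∣ a then (μ d : ℂ) * e a else 0 := by
    rw [← sum_filter, ← sum_mul, sum_divisors_filter_dvd_moebius a hq, ite_mul, one_mul, zero_mul]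
  have hinner : ∀ d ∈ q.divisors, ∑ a ∈ Icc 1 q, (if d ∣ a then (μ d : ℂ) * e a else 0) =
      μ d * idOfDvd k.natAbs (q / d) := by
    intro d hd
    obtain ⟨⟨t, rfl⟩, -⟩ := Nat.mem_divisors.1 hd
    have hd0 : d ≠ 0 := left_ne_zero_of_mul hq
    have ht0 : t ≠ 0 := right_ne_zero_of_mul hq
    have he (b : ℕ) : e (d * b) = exp (2 * Real.pi * I * ((b : ℤ) * k) / t) := by
      simp only [e]
      congr 1
      push_cast
      field_simp
    rw [← sum_filter, Icc_filter_dvd_mul_eq_map hd0, sum_map, ← mul_sum]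
    simp only [Function.Embedding.coeFn_mk, he, sum_Icc_exp_two_pi_I_mul_div ht0,
      Nat.mul_div_cancel_left t (Nat.pos_of_ne_zero hd0), idOfDvd_apply, Int.natCast_dvd]
    split_ifs <;> simp
  rw [ramanujanSum, sum_filter, sum_congr rfl fun a _ => hcoprime a, sum_comm,
    sum_congr rfl hinner, mul_apply,
    Nat.sum_divisorsAntidiagonal (fun x y => μ x * idOfDvd k.natAbs y)]
  push_cast
  rfl

theorem Nat.totient_eq_prod_primeFactors_sub_one {q : ℕ} (hq : Squarefree q) :
    φ q = ∏ p ∈ q.primeFactors, (p - 1) := by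
  have h := Nat.totient_mul_prod_primeFactors q
  rwa [Nat.prod_primeFactors_of_squarefree hq, mul_comm, Nat.mul_left_cancel_iff
    (Nat.pos_of_ne_zero hq.ne_zero)] at h

theorem pow_three_le_mul_sub_one_pow_four {p : ℕ} (hp : 2 ≤ p) :
    p ^ 3 ≤ (if p = 2 then 8 else 1) * (if p = 3 then 2 else 1) * (p - 1) ^ 4 := by
  obtain rfl | rfl | hp4 : p = 2 ∨ p = 3 ∨ 4 ≤ p := by omega
  · norm_num
  · norm_num
  · obtain ⟨t, rfl⟩ := Nat.exists_eq_add_of_le' hp4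
    simp only [show t + 4 ≠ 2 by omega, show t + 4 ≠ 3 by omega, if_false, one_mul,
      show t + 4 - 1 = t + 3 by omega]
    nlinarith [sq_nonneg t]

-- Only the primes `2` and `3` have `p ^ 3 > (p - 1) ^ 4`; they account for `16 = 8 * 2`.
theorem Squarefree.pow_three_le_sixteen_mul_totient_pow_four {q : ℕ} (hq : Squarefree q) :
    q ^ 3 ≤ 16 * φ q ^ 4 := by
  set w : ℕ → ℕ := fun p => (if p = 2 then 8 else 1) * (if p = 3 then 2 else 1)
  have hw : ∏ p ∈ q.primeFactors, w p ≤ 16 := by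
    simp only [w, prod_mul_distrib, prod_ite_eq']
    split_ifs <;> norm_num
  calc q ^ 3 = ∏ p ∈ q.primeFactors, p ^ 3 := by
        rw [prod_pow, Nat.prod_primeFactors_of_squarefree hq]
    _ ≤ ∏ p ∈ q.primeFactors, w p * (p - 1) ^ 4 := prod_le_prod' fun p hp =>
        pow_three_le_mul_sub_one_pow_four (Nat.prime_of_mem_primeFactors hp).two_le
    _ = (∏ p ∈ q.primeFactors, w p) * φ q ^ 4 := by
        rw [prod_mul_distrib, prod_pow, Nat.totient_eq_prod_primeFactors_sub_one hq]
    _ ≤ 16 * φ q ^ 4 := Nat.mul_le_mul_right _ hw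

theorem Squarefree.rpow_three_halves_le_four_mul_totient_sq {q : ℕ} (hq : Squarefree q) :
    (q : ℝ) ^ (3 / 2 : ℝ) ≤ 4 * (φ q : ℝ) ^ 2 := by
  rw [← pow_le_pow_iff_left₀ (by positivity) (by positivity) two_ne_zero, ← Real.rpow_mul_natCast
    (by positivity)]
  have h := hq.pow_three_le_sixteen_mul_totient_pow_four
  norm_num
  linear_combination (mod_cast h : (q : ℝ) ^ 3 ≤ 16 * (φ q : ℝ) ^ 4)

theorem abs_moebius_mul_idOfDvd_le_sigma {m : ℕ} (hm : m ≠ 0) (q : ℕ) :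
    |(μ * idOfDvd m) q| ≤ σ 1 m := by
  rw [mul_apply, Nat.sum_divisorsAntidiagonal' (fun x y => μ x * idOfDvd m y), sigma_one_apply]
  push_cast
  calc |∑ e ∈ q.divisors, μ (q / e) * idOfDvd m e|
      ≤ ∑ e ∈ q.divisors, idOfDvd m e := by
        refine (abs_sum_le_sum_abs _ _).trans (sum_le_sum fun e _ => ?_)
        rw [abs_mul, idOfDvd_apply]
        split_ifs
        · rw [Nat.abs_cast]
          exact mul_le_of_le_one_left (Int.natCast_nonneg e) abs_moebius_le_one
        · simp
    _ = ∑ e ∈ q.divisors with e ∣ m, (e : ℤ) := by simp only [idOfDvd_apply, sum_filter]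
    _ ≤ ∑ e ∈ m.divisors, (e : ℤ) :=
        sum_le_sum_of_subset_of_nonneg (fun e he => Nat.mem_divisors.2 ⟨(mem_filter.1 he).2, hm⟩)
          fun e _ _ => Int.natCast_nonneg e

/-- `μ(q)² c_q(m) / φ(q)²`, with `c_q(m)` evaluated by `ramanujanSum_eq_moebius_mul_idOfDvd`. -/
noncomputable def singularSeriesTerm (m q : ℕ) : ℝ :=
  (μ q : ℝ) ^ 2 * ((μ * idOfDvd m) q : ℝ) / (φ q : ℝ) ^ 2

theorem moebius_sq_mul_ramanujanSum_div_totient_sq (q : ℕ) (k : ℤ) :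
    (μ q : ℂ) ^ 2 * ramanujanSum q k / (φ q : ℂ) ^ 2 = singularSeriesTerm k.natAbs q := by
  rw [ramanujanSum_eq_moebius_mul_idOfDvd, singularSeriesTerm]
  push_cast
  rfl

theorem singularSeriesTerm_zero (m : ℕ) : singularSeriesTerm m 0 = 0 := by
  simp [singularSeriesTerm]

theorem singularSeriesTerm_one (m : ℕ) : singularSeriesTerm m 1 = 1 := by
  simp [singularSeriesTerm, (isMultiplicative_moebius_mul_idOfDvd m).map_one]

theorem singularSeriesTerm_mul {m a b : ℕ} (hab : a.Coprime b) :
    singularSeriesTerm m (a * b) = singularSeriesTerm m a * singularSeriesTerm m b := by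
  simp only [singularSeriesTerm, isMultiplicative_moebius.map_mul_of_coprime hab,
    (isMultiplicative_moebius_mul_idOfDvd m).map_mul_of_coprime hab,
    Nat.totient_mul hab]
  push_cast
  ring

theorem singularSeriesTerm_eq_zero_of_not_squarefree (m : ℕ) {q : ℕ} (hq : ¬Squarefree q) :
    singularSeriesTerm m q = 0 := by
  simp [singularSeriesTerm, moebius_eq_zero_of_not_squarefree hq]

theorem singularSeriesTerm_prime (m : ℕ) {p : ℕ} (hp : p.Prime) :
    singularSeriesTerm m p = ((if p ∣ m then (p : ℝ) else 0) - 1) / ((p : ℝ) - 1) ^ 2 := by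
  rw [singularSeriesTerm, mul_apply, Nat.sum_divisorsAntidiagonal (fun x y => μ x * idOfDvd m y),
    hp.divisors, sum_pair hp.one_lt.ne, Nat.totient_prime hp, moebius_apply_prime hp]
  simp [Nat.div_self hp.pos, idOfDvd_apply, Nat.cast_sub hp.one_le]
  split_ifs <;> ring

theorem abs_singularSeriesTerm_le {m : ℕ} (hm : m ≠ 0) (q : ℕ) :
    |singularSeriesTerm m q| ≤ 4 * σ 1 m / (q : ℝ) ^ (3 / 2 : ℝ) := by
  by_cases hq : Squarefree q
  · have hR : |((μ * idOfDvd m) q : ℝ)| ≤ σ 1 m := mod_cast abs_moebius_mul_idOfDvd_le_sigma hm q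
    have hq32 : 0 < (q : ℝ) ^ (3 / 2 : ℝ) := by
      have := hq.ne_zero
      positivity
    calc |singularSeriesTerm m q| = |((μ * idOfDvd m) q : ℝ)| / (φ q : ℝ) ^ 2 := by
          have hμ : (μ q : ℝ) ^ 2 = 1 := mod_cast moebius_sq_eq_one_of_squarefree hq
          rw [singularSeriesTerm, hμ, one_mul, abs_div,
            abs_of_nonneg (a := (φ q : ℝ) ^ 2) (by positivity)]
      _ ≤ σ 1 m / (q ^ (3 / 2 : ℝ) / 4) := by
          gcongr
          linarith [hq.rpow_three_halves_le_four_mul_totient_sq]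
      _ = 4 * σ 1 m / (q : ℝ) ^ (3 / 2 : ℝ) := by field_simp
  · rw [singularSeriesTerm_eq_zero_of_not_squarefree m hq, abs_zero]
    positivity

theorem summable_norm_singularSeriesTerm {m : ℕ} (hm : m ≠ 0) :
    Summable fun q => ‖singularSeriesTerm m q‖ := by
  refine .of_nonneg_of_le (fun _ => norm_nonneg _) (fun q => ?_)
    ((Real.summable_one_div_nat_rpow.2 (by norm_num : (1 : ℝ) < 3 / 2)).mul_left (4 * (σ 1 m : ℝ)))
  rw [Real.norm_eq_abs, mul_one_div]
  exact abs_singularSeriesTerm_le hm q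

theorem tsum_singularSeriesTerm_prime_pow (m : ℕ) {p : ℕ} (hp : p.Prime) :
    ∑' e, singularSeriesTerm m (p ^ e) = 1 + singularSeriesTerm m p := by
  rw [tsum_eq_sum (s := {0, 1}), sum_pair zero_ne_one, pow_zero, pow_one, singularSeriesTerm_one]
  intro e he
  refine singularSeriesTerm_eq_zero_of_not_squarefree m fun hsq => ?_
  simp only [mem_insert, mem_singleton, not_or] at he
  exact he.2 ((Nat.squarefree_pow_iff hp.ne_one he.1).1 hsq).2

theorem prod_Icc_one_sub_one_div_sq {N : ℕ} (hN : 1 ≤ N) :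
    ∏ j ∈ Icc 2 N, (1 - 1 / (j : ℝ) ^ 2) = ((N : ℝ) + 1) / (2 * N) := by
  induction N, hN using Nat.le_induction with
  | base => norm_num
  | succ N hN ih =>
    rw [prod_Icc_succ_top (by omega), ih]
    have : (N : ℝ) ≠ 0 := by positivity
    field_simp
    push_cast
    ring

theorem one_sub_one_div_sq_mem_Icc {j : ℕ} (hj : 1 ≤ j) :
    1 - 1 / (j : ℝ) ^ 2 ∈ Set.Icc 0 1 := by
  have hj' : (1 : ℝ) ≤ (j : ℝ) ^ 2 := one_le_pow₀ (mod_cast hj)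
  constructor
  · rw [sub_nonneg]
    exact div_le_one_of_le₀ hj' (by positivity)
  · linarith [show 0 ≤ 1 / (j : ℝ) ^ 2 by positivity]

theorem half_lt_prod_one_sub_one_div_sq {T : Finset ℕ} (hT : ∀ j ∈ T, 2 ≤ j) :
    1 / 2 < ∏ j ∈ T, (1 - 1 / (j : ℝ) ^ 2) := by
  set N := T.sup id + 1
  have hsub : T ⊆ Icc 2 N := fun j hj =>
    mem_Icc.2 ⟨hT j hj, (le_sup (f := id) hj).trans (Nat.le_succ _)⟩
  have hfac (j) (hj : j ∈ Icc 2 N) := one_sub_one_div_sq_mem_Icc (by linarith [(mem_Icc.1 hj).1])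
  have hN : (0 : ℝ) < N := by positivity
  calc (1 : ℝ) / 2 < ((N : ℝ) + 1) / (2 * N) := by
        rw [div_lt_div_iff₀ two_pos (by positivity)]
        linarith
    _ = ∏ j ∈ Icc 2 N, (1 - 1 / (j : ℝ) ^ 2) := (prod_Icc_one_sub_one_div_sq (by omega)).symm
    _ ≤ ∏ j ∈ T, (1 - 1 / (j : ℝ) ^ 2) :=
        prod_le_prod_of_subset_of_le_one hsub (fun j hj => (hfac j hj).1)
          fun j hj _ => (hfac j hj).2

theorem singularSeriesTerm_two {m : ℕ} (hm : 2 ∣ m) : singularSeriesTerm m 2 = 1 := by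
  rw [singularSeriesTerm_prime m Nat.prime_two]
  norm_num [hm]

theorem one_sub_one_div_sq_le_one_add_singularSeriesTerm (m : ℕ) {p : ℕ} (hp : p.Prime) :
    1 - 1 / ((p - 1 : ℕ) : ℝ) ^ 2 ≤ 1 + singularSeriesTerm m p := by
  rw [singularSeriesTerm_prime m hp, Nat.cast_sub hp.one_le, Nat.cast_one, sub_eq_add_neg,
    ← neg_div]
  have : (0 : ℝ) ≤ if p ∣ m then (p : ℝ) else 0 := by split_ifs <;> positivity
  gcongr
  linarith

theorem one_le_prod_primesBelow_one_add_singularSeriesTerm {m N : ℕ} (hm : 2 ∣ m) (hN : 3 ≤ N) :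
    1 ≤ ∏ p ∈ N.primesBelow, (1 + singularSeriesTerm m p) := by
  have h2 : 2 ∈ N.primesBelow := Nat.mem_primesBelow.2 ⟨by omega, Nat.prime_two⟩
  set S := N.primesBelow.erase 2
  have hS (p) (hp : p ∈ S) : p.Prime ∧ 3 ≤ p := by
    obtain ⟨hp2, hp⟩ := mem_erase.1 hp
    have hpp := Nat.prime_of_mem_primesBelow hp
    exact ⟨hpp, by have := hpp.two_le; omega⟩
  have hodd : 1 / 2 < ∏ p ∈ S, (1 - 1 / ((p - 1 : ℕ) : ℝ) ^ 2) := by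
    rw [← prod_image (f := fun j : ℕ => 1 - 1 / (j : ℝ) ^ 2) fun a ha b hb hab => by
      have := (hS a ha).2; have := (hS b hb).2; omega]
    refine half_lt_prod_one_sub_one_div_sq fun j hj => ?_
    obtain ⟨p, hp, rfl⟩ := mem_image.1 hj
    have := (hS p hp).2
    omega
  rw [← mul_prod_erase _ _ h2, singularSeriesTerm_two hm]
  calc (1 : ℝ) ≤ (1 + 1) * ∏ p ∈ S, (1 - 1 / ((p - 1 : ℕ) : ℝ) ^ 2) := by linarith
    _ ≤ (1 + 1) * ∏ p ∈ S, (1 + singularSeriesTerm m p) := by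
        refine mul_le_mul_of_nonneg_left
          (prod_le_prod (fun p hp => ?_) fun p hp => ?_) (by norm_num)
        · exact (one_sub_one_div_sq_mem_Icc (by have := (hS p hp).2; omega)).1
        · exact one_sub_one_div_sq_le_one_add_singularSeriesTerm m (hS p hp).1

theorem one_le_tsum_singularSeriesTerm {m : ℕ} (hm0 : m ≠ 0) (hm : 2 ∣ m) :
    1 ≤ ∑' q, singularSeriesTerm m q := by
  have htend := EulerProduct.eulerProduct (singularSeriesTerm_one m)
    (fun hab => singularSeriesTerm_mul hab) (summable_norm_singularSeriesTerm hm0)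
    (singularSeriesTerm_zero m)
  refine ge_of_tendsto htend (Filter.eventually_atTop.2 ⟨3, fun N hN => ?_⟩)
  rw [prod_congr rfl fun p hp =>
    tsum_singularSeriesTerm_prime_pow m (Nat.prime_of_mem_primesBelow hp)]
  exact one_le_prod_primesBelow_one_add_singularSeriesTerm hm hN

/-- The singular series for the Goldbach problem is bounded below: there is an
absolute constant `c > 0` such that for every positive integer `n`,
`∑_{q=1}^∞ μ(q)² c_q(−2n)/φ(q)² ≥ c` (the sum being a real number, we take the
real part of the complex expression). -/
theorem stmt_12 : ∃ c > 0, ∀ n : ℕ, 0 < n →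
    c ≤ (∑' q : ℕ, ((ArithmeticFunction.moebius q : ℂ)) ^ 2 *
        ramanujanSum q (-(2 * n)) / ((Nat.totient q : ℂ)) ^ 2).re := by
  refine ⟨1, one_pos, fun n hn => ?_⟩
  simp_rw [moebius_sq_mul_ramanujanSum_div_totient_sq, ← ofReal_tsum, ofReal_re]
  have h2n : (-(2 * n : ℤ)).natAbs = 2 * n := by omega
  rw [h2n]
  exact one_le_tsum_singularSeriesTerm (by omega) (dvd_mul_right 2 n)
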